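/- The quantity √3 · V(π/√3) / (4π²), where V(π/√3) = 2π ∫₀^{π/√3} ∫_{−π/2}^{π/2} τ · sin(τ cos v) dv dτ, satisfies 0.8775 < √3 · V(π/√3) / (4π²) < 0.8776. (This is the density δ(R₄, K₄) ≈ 0.87757183 of the densest multiply transitive geodesic ball packing of the S²×ℝ space group 4q.I.2 (q = 2) of Theorem 2.8; in particular it exceeds the Böröczky–Florian upper bound ≈ 0.85327613 for congruent ball packings of hyperbolic 3-space.) -/

import Mathlib

/-!
The partial sums of the Taylor series of `sin` alternately under- and overestimate `sin` on
`[0, ∞)` (each bound follows from the previous one by integrating from `0`). Substituting them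
into the double integral turns it into a polynomial in `ρ`, whose coefficients involve the
Wallis integrals `∫ cos ^ (2k+1)`. Since `√3 · R₄ = π`, the density equals
`I(R₄) / (2 R₄)`, where `I` is the double integral, and the Taylor polynomials of degrees 7
and 9 bound this by polynomials in `R₄² = π² / 3`, evaluated using `3.141592 < π < 3.141593`.
-/

open Real

/-- The volume of the geodesic ball of radius `ρ` in `S² × ℝ` geometry
(Theorem 2.4 of the paper). -/
noncomputable def ballVol (ρ : ℝ) : ℝ :=
  2 * π * ∫ τ in (0 : ℝ)..ρ, ∫ v in (-(π / 2))..(π / 2), τ * Real.sin (τ * Real.cos v)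

open intervalIntegral Finset
open scoped Nat

noncomputable def sinTaylor (n : ℕ) (x : ℝ) : ℝ :=
  ∑ k ∈ range n, (-1) ^ k * x ^ (2 * k + 1) / (2 * k + 1)!

noncomputable def cosTaylor (n : ℕ) (x : ℝ) : ℝ :=
  ∑ k ∈ range n, (-1) ^ k * x ^ (2 * k) / (2 * k)!

lemma sinTaylor_zero_right (n : ℕ) : sinTaylor n 0 = 0 := by
  simp [sinTaylor]

lemma cosTaylor_succ_zero_right (n : ℕ) : cosTaylor (n + 1) 0 = 1 := by
  simp [cosTaylor, sum_range_succ']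

lemma hasDerivAt_sinTaylor (n : ℕ) (x : ℝ) : HasDerivAt (sinTaylor n) (cosTaylor n x) x := by
  unfold sinTaylor cosTaylor
  refine HasDerivAt.fun_sum fun k _ => ?_
  refine (((hasDerivAt_pow (2 * k + 1) x).const_mul ((-1 : ℝ) ^ k)).div_const
    ((2 * k + 1)! : ℝ)).congr_deriv ?_
  rw [Nat.factorial_succ]
  push_cast
  field_simp

lemma hasDerivAt_cosTaylor_succ (n : ℕ) (x : ℝ) :
    HasDerivAt (cosTaylor (n + 1)) (-sinTaylor n x) x := by
  have hsplit : cosTaylor (n + 1) =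
      fun y => ∑ k ∈ range n, (-1 : ℝ) ^ (k + 1) * y ^ (2 * k + 2) / (2 * k + 2)! + 1 := by
    funext y
    simp [cosTaylor, sum_range_succ', mul_add]
  rw [hsplit, sinTaylor, ← sum_neg_distrib]
  refine (HasDerivAt.fun_sum fun k _ => ?_).add_const 1
  refine (((hasDerivAt_pow (2 * k + 2) x).const_mul ((-1 : ℝ) ^ (k + 1))).div_const
    ((2 * k + 2)! : ℝ)).congr_deriv ?_
  rw [Nat.factorial_succ (2 * k + 1)]
  push_cast
  field_simp
  ring

lemma le_of_hasDerivAt_nonneg {f f' : ℝ → ℝ} {a x : ℝ} (hf : ∀ y, HasDerivAt f (f' y) y)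
    (hf' : ∀ y, a ≤ y → 0 ≤ f' y) (hx : a ≤ x) : f a ≤ f x :=
  monotoneOn_of_hasDerivWithinAt_nonneg (convex_Ici a)
    (fun y _ => (hf y).continuousAt.continuousWithinAt) (fun y _ => (hf y).hasDerivWithinAt)
    (fun y hy => hf' y (interior_subset hy)) Set.self_mem_Ici hx hx

lemma neg_one_pow_mul_taylor_sub_nonneg (n : ℕ) {x : ℝ} (hx : 0 ≤ x) :
    0 ≤ (-1) ^ n * (cosTaylor (n + 1) x - cos x) ∧
      0 ≤ (-1) ^ n * (sinTaylor (n + 1) x - sin x) := by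
  induction n generalizing x with
  | zero => simp [cosTaylor, sinTaylor, cos_le_one, sin_le hx]
  | succ n ih =>
    have hcos : ∀ y, 0 ≤ y → 0 ≤ (-1) ^ (n + 1) * (cosTaylor (n + 2) y - cos y) := by
      intro y hy
      have := le_of_hasDerivAt_nonneg
        (fun z => ((hasDerivAt_cosTaylor_succ (n + 1) z).sub (hasDerivAt_cos z)).const_mul
          ((-1 : ℝ) ^ (n + 1)))
        (fun z hz => by
          have := (ih hz).2
          rw [pow_succ]
          linarith) hy
      simpa [cosTaylor_succ_zero_right] using this
    refine ⟨hcos x hx, ?_⟩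
    have := le_of_hasDerivAt_nonneg
      (fun z => ((hasDerivAt_sinTaylor (n + 2) z).sub (hasDerivAt_sin z)).const_mul
        ((-1 : ℝ) ^ (n + 1))) (fun z hz => hcos z hz) hx
    simpa [sinTaylor_zero_right] using this

lemma sinTaylor_le_sin {n : ℕ} (hn : Odd n) {x : ℝ} (hx : 0 ≤ x) :
    sinTaylor (n + 1) x ≤ sin x := by
  have := (neg_one_pow_mul_taylor_sub_nonneg n hx).2
  rw [hn.neg_one_pow] at this
  linarith

lemma sin_le_sinTaylor {n : ℕ} (hn : Even n) {x : ℝ} (hx : 0 ≤ x) :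
    sin x ≤ sinTaylor (n + 1) x := by
  have := (neg_one_pow_mul_taylor_sub_nonneg n hx).2
  rw [hn.neg_one_pow] at this
  linarith

lemma continuous_sinTaylor (n : ℕ) : Continuous (sinTaylor n) := by
  unfold sinTaylor
  fun_prop

-- Chosen so that `ballVol ρ = 2 * π * shellIntegral sin ρ` holds by definition.
noncomputable def shellIntegral (f : ℝ → ℝ) (ρ : ℝ) : ℝ :=
  ∫ τ in (0 : ℝ)..ρ, ∫ v in (-(π / 2))..(π / 2), τ * f (τ * cos v)

lemma shellIntegral_mono {f g : ℝ → ℝ} (hf : Continuous f) (hg : Continuous g)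
    (hfg : ∀ x, 0 ≤ x → f x ≤ g x) {ρ : ℝ} (hρ : 0 ≤ ρ) :
    shellIntegral f ρ ≤ shellIntegral g ρ := by
  have hint : ∀ h : ℝ → ℝ, Continuous h →
      IntervalIntegrable (fun τ => ∫ v in (-(π / 2))..(π / 2), τ * h (τ * cos v))
        MeasureTheory.volume 0 ρ :=
    fun h hh => (continuous_parametric_intervalIntegral_of_continuous'
      (f := fun τ v => τ * h (τ * cos v)) (by fun_prop) _ _).intervalIntegrable _ _
  refine integral_mono_on hρ (hint f hf) (hint g hg) fun τ hτ =>
    integral_mono_on (by linarith [pi_pos]) (by apply Continuous.intervalIntegrable; fun_prop)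
      (by apply Continuous.intervalIntegrable; fun_prop) fun v hv => ?_
  exact mul_le_mul_of_nonneg_left (hfg _ (mul_nonneg hτ.1 (cos_nonneg_of_mem_Icc hv))) hτ.1

lemma integral_cos_pow_odd (k : ℕ) :
    ∫ v in (-(π / 2))..(π / 2), cos v ^ (2 * k + 1) =
      2 * ∏ i ∈ range k, (2 * (i : ℝ) + 2) / (2 * i + 3) := by
  rw [← integral_sin_pow_odd]
  simp_rw [← sin_add_pi_div_two]
  rw [integral_comp_add_right (fun v => sin v ^ (2 * k + 1))]
  ring_nf

lemma shellIntegral_sinTaylor (n : ℕ) (ρ : ℝ) :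
    shellIntegral (sinTaylor n) ρ = ∑ k ∈ range n,
      (-1) ^ k * (∫ v in (-(π / 2))..(π / 2), cos v ^ (2 * k + 1)) / (2 * k + 1)! *
        (ρ ^ (2 * k + 3) / (2 * k + 3)) := by
  have hinner : ∀ τ : ℝ, ∫ v in (-(π / 2))..(π / 2), τ * sinTaylor n (τ * cos v) =
      ∑ k ∈ range n, (-1) ^ k * (∫ v in (-(π / 2))..(π / 2), cos v ^ (2 * k + 1)) /
        (2 * k + 1)! * τ ^ (2 * k + 2) := by
    intro τ
    simp_rw [sinTaylor, mul_sum]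
    rw [integral_finsetSum fun k _ => by apply Continuous.intervalIntegrable; fun_prop]
    refine sum_congr rfl fun k _ => ?_
    have hterm : (fun v => τ * ((-1) ^ k * (τ * cos v) ^ (2 * k + 1) / (2 * k + 1)!)) =
        fun v => (-1) ^ k * τ ^ (2 * k + 2) / (2 * k + 1)! * cos v ^ (2 * k + 1) := by
      funext v
      ring
    rw [hterm, integral_const_mul]
    ring
  simp_rw [shellIntegral, hinner]
  rw [integral_finsetSum fun k _ => by apply Continuous.intervalIntegrable; fun_prop]
  refine sum_congr rfl fun k _ => ?_
  rw [integral_const_mul, integral_pow]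
  push_cast
  ring_nf

lemma shellIntegral_sin_ge {ρ : ℝ} (hρ : 0 ≤ ρ) :
    ρ ^ 3 * (2 / 3 - 2 / 45 * ρ ^ 2 + 2 / 1575 * (ρ ^ 2) ^ 2 - 2 / 99225 * (ρ ^ 2) ^ 3) ≤
      shellIntegral sin ρ := by
  have h := shellIntegral_mono (continuous_sinTaylor 4) continuous_sin
    (fun x hx => sinTaylor_le_sin (n := 3) (by decide) hx) hρ
  convert h using 1
  simp only [shellIntegral_sinTaylor, integral_cos_pow_odd, sum_range_succ, prod_range_succ,
    sum_range_zero, prod_range_zero, Nat.factorial]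
  norm_num
  ring

lemma shellIntegral_sin_le {ρ : ℝ} (hρ : 0 ≤ ρ) :
    shellIntegral sin ρ ≤ ρ ^ 3 * (2 / 3 - 2 / 45 * ρ ^ 2 + 2 / 1575 * (ρ ^ 2) ^ 2 -
      2 / 99225 * (ρ ^ 2) ^ 3 + 2 / 9823275 * (ρ ^ 2) ^ 4) := by
  have h := shellIntegral_mono continuous_sin (continuous_sinTaylor 5)
    (fun x hx => sin_le_sinTaylor (n := 4) (by decide) hx) hρ
  convert h using 1
  simp only [shellIntegral_sinTaylor, integral_cos_pow_odd, sum_range_succ, prod_range_succ,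
    sum_range_zero, prod_range_zero, Nat.factorial]
  norm_num
  ring

lemma lt_shellIntegral_sin_div {ρ : ℝ} (hρ : 0 < ρ)
    (ht : ρ ^ 2 ∈ Set.Ioo 3.289866 3.28987) :
    0.8775 < shellIntegral sin ρ / (2 * ρ) := by
  set t := ρ ^ 2
  obtain ⟨ht₁, ht₂⟩ := ht
  have hpoly : 1.755 < t * (2 / 3 - 2 / 45 * t + 2 / 1575 * t ^ 2 - 2 / 99225 * t ^ 3) := by
    have h0 : (0 : ℝ) ≤ 3.289866 := by norm_num
    have := pow_lt_pow_left₀ ht₂ (h0.trans ht₁.le) (n := 2) two_ne_zero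
    have := pow_lt_pow_left₀ ht₁ h0 (n := 3) three_ne_zero
    have := pow_lt_pow_left₀ ht₂ (h0.trans ht₁.le) (n := 4) four_ne_zero
    nlinarith
  rw [lt_div_iff₀ (by positivity)]
  calc 0.8775 * (2 * ρ) = ρ * 1.755 := by ring
    _ < ρ * (t * (2 / 3 - 2 / 45 * t + 2 / 1575 * t ^ 2 - 2 / 99225 * t ^ 3)) :=
      mul_lt_mul_of_pos_left hpoly hρ
    _ = ρ ^ 3 * (2 / 3 - 2 / 45 * t + 2 / 1575 * t ^ 2 - 2 / 99225 * t ^ 3) := by ring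
    _ ≤ shellIntegral sin ρ := shellIntegral_sin_ge hρ.le

lemma shellIntegral_sin_div_lt {ρ : ℝ} (hρ : 0 < ρ)
    (ht : ρ ^ 2 ∈ Set.Ioo 3.289866 3.28987) :
    shellIntegral sin ρ / (2 * ρ) < 0.8776 := by
  set t := ρ ^ 2
  obtain ⟨ht₁, ht₂⟩ := ht
  have hpoly : t * (2 / 3 - 2 / 45 * t + 2 / 1575 * t ^ 2 - 2 / 99225 * t ^ 3 +
      2 / 9823275 * t ^ 4) < 1.7552 := by
    have h0 : (0 : ℝ) ≤ 3.289866 := by norm_num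
    have := pow_lt_pow_left₀ ht₁ h0 (n := 2) two_ne_zero
    have := pow_lt_pow_left₀ ht₂ (h0.trans ht₁.le) (n := 3) three_ne_zero
    have := pow_lt_pow_left₀ ht₁ h0 (n := 4) four_ne_zero
    have := pow_lt_pow_left₀ ht₂ (h0.trans ht₁.le) (n := 5) (by norm_num)
    nlinarith
  rw [div_lt_iff₀ (by positivity)]
  calc shellIntegral sin ρ
      ≤ ρ ^ 3 * (2 / 3 - 2 / 45 * t + 2 / 1575 * t ^ 2 - 2 / 99225 * t ^ 3 +
          2 / 9823275 * t ^ 4) := shellIntegral_sin_le hρ.le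
    _ = ρ * (t * (2 / 3 - 2 / 45 * t + 2 / 1575 * t ^ 2 - 2 / 99225 * t ^ 3 +
          2 / 9823275 * t ^ 4)) := by ring
    _ < ρ * 1.7552 := mul_lt_mul_of_pos_left hpoly hρ
    _ = 0.8776 * (2 * ρ) := by ring

lemma pi_sq_div_three_mem_Ioo : π ^ 2 / 3 ∈ Set.Ioo 3.289866 3.28987 := by
  have := pi_gt_d6
  have := pi_lt_d6
  constructor <;> nlinarith

/-- Here `R₄ = π/√3` and the Dirichlet–Voronoi cell has volume `4π²/√3`. -/
theorem density_R4_bounds :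
    0.8775 < Real.sqrt 3 * ballVol (π / Real.sqrt 3) / (4 * π ^ 2) ∧
      Real.sqrt 3 * ballVol (π / Real.sqrt 3) / (4 * π ^ 2) < 0.8776 := by
  set R := π / √3
  have hR : 0 < R := by positivity
  have hR_sq : R ^ 2 = π ^ 2 / 3 := by rw [div_pow, sq_sqrt zero_le_three]
  have hR_mul : √3 * R = π := mul_div_cancel₀ π (by positivity)
  have hdensity : √3 * ballVol R / (4 * π ^ 2) = shellIntegral sin R / (2 * R) := by
    rw [ballVol, ← shellIntegral]
    field_simp
    linear_combination 4 * shellIntegral sin R * hR_mul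
  rw [hdensity]
  exact ⟨lt_shellIntegral_sin_div hR (hR_sq ▸ pi_sq_div_three_mem_Ioo),
    shellIntegral_sin_div_lt hR (hR_sq ▸ pi_sq_div_three_mem_Ioo)⟩
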